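/- arXiv:2006.14401 — 2 statements merged into one kernel-verified Lean document; each statement's English description precedes it below -/
import Mathlib

section
/- Let (R, m) be a 1-dimensional Cohen-Macaulay local ring which is not a valuation ring, and let I ⊆ m² be an irreducible m-primary ideal with minimal reduction (a). Then λ(I/(a)) ≥ r(R) - 1. -/
open IsLocalRing

/-!
Write `A = (a)` and `m` for the maximal ideal. Since `A ⊆ I`, the socle `(A : m)/A` of `R/A`
is filtered by `((A : m) ∩ I)/A`, which embeds in `I/A`, and
`(A : m)/((A : m) ∩ I) ≅ ((A : m) + I)/I`, which embeds in the socle `(I : m)/I` of `R/I`.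
Irreducibility of `I` makes the latter cyclic, hence of length at most one: if `u ∉ I` and
`v ∈ (I : m) \ (I + (u))`, then `I = (I + (u)) ∩ (I + (v))`, since an element `i + s v` of the
right side with `s` a unit would put `v` into `I + (u)`. So `r = λ((A : m)/A) ≤ λ(I/A) + 1`.
-/

/-- The length of a module, realized as the Krull dimension of its lattice of submodules. -/
noncomputable def modLength (R M : Type*) [CommRing R] [AddCommGroup M] [Module R M] :
    WithBot ℕ∞ :=
  Order.krullDim (Submodule R M)

/-- `λ(A/B)`: the length of the quotient of the ideal `A` by `B`. -/
noncomputable def quotLength (R : Type*) [CommRing R] (A B : Ideal R) : WithBot ℕ∞ :=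
  modLength R (↥A ⧸ (Submodule.comap A.subtype B))

/-- An ideal is primary to the maximal ideal (`m`-primary). -/
def IsMaxPrimary (R : Type*) [CommRing R] [IsLocalRing R] (I : Ideal R) : Prop :=
  I ≠ ⊤ ∧ ∃ n : ℕ, (maximalIdeal R) ^ n ≤ I

/-- An ideal is irreducible: it is not the intersection of two strictly larger ideals. -/
def IsIrreducibleIdeal (R : Type*) [CommRing R] (I : Ideal R) : Prop :=
  I ≠ ⊤ ∧ ∀ J K : Ideal R, I = J ⊓ K → I = J ∨ I = K

namespace Submodule

variable {R M : Type*} [Ring R] [AddCommGroup M] [Module R M]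

/-- `P.subquotLength N` is the length of `P/(N ∩ P)`. -/
noncomputable def subquotLength (P N : Submodule R M) : ℕ∞ :=
  Module.length R (P ⧸ N.comap P.subtype)

theorem comap_inclusion_comap_subtype {P P' : Submodule R M} (h : P ≤ P') (N : Submodule R M) :
    (N.comap P'.subtype).comap (inclusion h) = N.comap P.subtype := by
  rw [← comap_comp, subtype_comp_inclusion]

noncomputable def subquotInclusion {P P' : Submodule R M} (h : P ≤ P') (N : Submodule R M) :
    P ⧸ N.comap P.subtype →ₗ[R] P' ⧸ N.comap P'.subtype :=
  mapQ _ _ (inclusion h) (comap_inclusion_comap_subtype h N).ge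

theorem subquotInclusion_injective {P P' : Submodule R M} (h : P ≤ P') (N : Submodule R M) :
    Function.Injective (subquotInclusion h N) := by
  rw [← LinearMap.ker_eq_bot, subquotInclusion, ker_mapQ, comap_inclusion_comap_subtype,
    mkQ_map_self]

theorem subquotLength_mono {P P' : Submodule R M} (N : Submodule R M) (h : P ≤ P') :
    P.subquotLength N ≤ P'.subquotLength N :=
  Module.length_le_of_injective _ (subquotInclusion_injective h N)

theorem subquotLength_add {N K P : Submodule R M} (hNK : N ≤ K) (hKP : K ≤ P) :
    K.subquotLength N + P.subquotLength K = P.subquotLength N := by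
  symm
  refine Module.length_eq_add_of_exact (subquotInclusion hKP N)
    (factor (comap_mono hNK : N.comap P.subtype ≤ K.comap P.subtype))
    (subquotInclusion_injective hKP N) (factor_surjective _) ?_
  rw [LinearMap.exact_iff, ker_mapQ, subquotInclusion, range_mapQ, range_inclusion]
  rfl

theorem subquotLength_inf_eq_sup (P Q : Submodule R M) :
    P.subquotLength (P ⊓ Q) = (P ⊔ Q).subquotLength Q :=
  (LinearMap.quotientInfEquivSupQuotient P Q).length_eq

end Submodule

theorem quotLength_eq_subquotLength {R : Type*} [CommRing R] (A B : Ideal R) :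
    quotLength R A B = A.subquotLength B :=
  (Module.coe_length _ _).symm

section IrreducibleIdeal

variable {R : Type*} [CommRing R] [IsLocalRing R] {I : Ideal R}

theorem IsIrreducibleIdeal.mem_sup_span_singleton_of_mem_colon (hI : IsIrreducibleIdeal R I)
    {u v : R} (hv : v ∈ I.colon (maximalIdeal R)) (hu : u ∉ I) : v ∈ I ⊔ Ideal.span {u} := by
  by_contra hvu
  have hmeet : I = (I ⊔ Ideal.span {u}) ⊓ (I ⊔ Ideal.span {v}) := by
    refine le_antisymm (le_inf le_sup_left le_sup_left) fun z ⟨hzu, hzv⟩ => ?_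
    obtain ⟨i, hi, w, hw, rfl⟩ := Submodule.mem_sup.1 hzv
    obtain ⟨s, rfl⟩ := Ideal.mem_span_singleton'.1 hw
    by_cases hs : s ∈ maximalIdeal R
    · exact I.add_mem hi (by simpa [mul_comm] using Submodule.mem_colon.1 hv s hs)
    · obtain ⟨t, hts⟩ := (notMem_maximalIdeal.1 hs).exists_left_inv
      refine absurd ?_ hvu
      have hv_eq : v = t * (i + s * v) - t * i := by
        rw [mul_add, ← mul_assoc, hts, one_mul, add_sub_cancel_left]
      rw [hv_eq]
      exact sub_mem (Ideal.mul_mem_left _ _ hzu) (Ideal.mul_mem_left _ _ (Ideal.mem_sup_left hi))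
  rcases hI.2 _ _ hmeet with h | h
  · exact hu (h ▸ Ideal.mem_sup_right (Ideal.mem_span_singleton_self u))
  · exact hvu (Ideal.mem_sup_left (h ▸ Ideal.mem_sup_right (Ideal.mem_span_singleton_self v)))

theorem IsIrreducibleIdeal.subquotLength_colon_maximalIdeal_le_one (hI : IsIrreducibleIdeal R I) :
    (I.colon (maximalIdeal R)).subquotLength I ≤ 1 := by
  rw [Submodule.subquotLength, ← WithBot.coe_le_coe, Module.coe_length, WithBot.coe_one,
    Order.krullDim_le_one_iff_of_boundedOrder]
  refine fun X => or_iff_not_imp_left.2 fun hX => eq_top_iff.2 fun y _ => ?_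
  obtain ⟨x, hxX, hx0⟩ := (Submodule.ne_bot_iff X).1 hX
  obtain ⟨⟨u, hu⟩, rfl⟩ := Submodule.Quotient.mk_surjective _ x
  obtain ⟨⟨v, hv⟩, rfl⟩ := Submodule.Quotient.mk_surjective _ y
  have huI : u ∉ I := fun h => hx0 ((Submodule.Quotient.mk_eq_zero _).2 h)
  obtain ⟨i, hi, w, hw, hv_eq⟩ :=
    Submodule.mem_sup.1 (hI.mem_sup_span_singleton_of_mem_colon hv huI)
  obtain ⟨t, rfl⟩ := Ideal.mem_span_singleton'.1 hw
  convert X.smul_mem t hxX using 1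
  rw [← Submodule.Quotient.mk_smul, Submodule.Quotient.eq]
  simpa [← hv_eq] using hi

end IrreducibleIdeal

/-- `r` is the Cohen-Macaulay type of `R`, read off as the length of the socle `((a) : m)/(a)` of
`R/(a)`. -/
theorem length_ge_type_sub_one_of_irreducible_general
    (R : Type*) [CommRing R] [IsLocalRing R]
    (I : Ideal R) (hIirr : IsIrreducibleIdeal R I)
    (a : R) (haI : a ∈ I)
    (r : ℕ)
    (htype : quotLength R ((Ideal.span {a}).colon (maximalIdeal R)) (Ideal.span {a})
      = (r : WithBot ℕ∞)) :
    quotLength R I (Ideal.span {a}) ≥ ((r - 1 : ℕ) : WithBot ℕ∞) := by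
  set m := maximalIdeal R
  set A := Ideal.span {a}
  have hAI : A ≤ I := (Ideal.span_singleton_le_iff_mem I).2 haI
  have hsocle : A.colon m ≤ I.colon m := Submodule.colon_mono hAI le_rfl
  have hr : (r : ℕ∞) ≤ I.subquotLength A + 1 := calc
    (r : ℕ∞) = (A.colon m).subquotLength A := by
      rw [quotLength_eq_subquotLength] at htype; exact_mod_cast htype.symm
    _ = (A.colon m ⊓ I).subquotLength A + (A.colon m).subquotLength (A.colon m ⊓ I) :=
      (Submodule.subquotLength_add (le_inf Ideal.le_colon hAI) inf_le_left).symm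
    _ = (A.colon m ⊓ I).subquotLength A + (A.colon m ⊔ I).subquotLength I := by
      rw [Submodule.subquotLength_inf_eq_sup]
    _ ≤ I.subquotLength A + (I.colon m).subquotLength I :=
      add_le_add (Submodule.subquotLength_mono _ inf_le_right)
        (Submodule.subquotLength_mono _ (sup_le hsocle Ideal.le_colon))
    _ ≤ I.subquotLength A + 1 := by
      gcongr; exact hIirr.subquotLength_colon_maximalIdeal_le_one
  rw [ge_iff_le, quotLength_eq_subquotLength, ← WithBot.coe_natCast, WithBot.coe_le_coe,
    ENat.natCast_sub, Nat.cast_one, tsub_le_iff_right]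
  exact hr

/-- let `(R, m)` be a one-dimensional Cohen-Macaulay local ring which is not a
valuation ring, and let `I ⊆ m²` be an irreducible `m`-primary ideal with minimal reduction
`(a)`.  Then `λ(I/(a)) ≥ r(R) - 1`, where `r(R)` is the Cohen-Macaulay type of `R`, computed
as the length of the socle `((a) : m)/(a)` of `R/(a)`. -/
theorem length_ge_type_sub_one_of_irreducible
    (R : Type*) [CommRing R] [IsLocalRing R] [IsNoetherianRing R]
    (hdim : ringKrullDim R = 1)
    (hCM : ∃ x ∈ maximalIdeal R, x ∈ nonZeroDivisors R)
    (hnotval : ¬ (maximalIdeal R).IsPrincipal)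
    (I : Ideal R) (hIprim : IsMaxPrimary R I) (hIirr : IsIrreducibleIdeal R I)
    (hIm2 : I ≤ (maximalIdeal R) ^ 2)
    (a : R) (haI : a ∈ I) (hareg : a ∈ nonZeroDivisors R)
    (hred : ∃ n : ℕ, I ^ (n + 1) = Ideal.span {a} * I ^ n)
    (r : ℕ)
    (htype : quotLength R ((Ideal.span {a}).colon (maximalIdeal R)) (Ideal.span {a})
      = (r : WithBot ℕ∞)) :
    quotLength R I (Ideal.span {a}) ≥ ((r - 1 : ℕ) : WithBot ℕ∞) :=
  length_ge_type_sub_one_of_irreducible_general R I hIirr a haI r htype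
end

section
/- Let (R, m) be a 1-dimensional Cohen-Macaulay local ring which is not a DVR, and let A = m :_Q m = Hom(m, m) computed in the total ring of fractions Q. Then A = R :_Q m, and the minimal number of generators of A as an R-module equals r(R) + 1, where r(R) is the Cohen-Macaulay type of R. -/
open IsLocalRing

/-- Minimal number of generators of a submodule. -/
noncomputable def nuSub (R Q : Type*) [CommRing R] [CommRing Q] [Algebra R Q]
    (N : Submodule R Q) : ℕ :=
  sInf {n | ∃ s : Finset Q, s.card = n ∧ Submodule.span R (s : Set Q) = N}

/-!
If `q ∈ R :_Q m` and `q a` were a unit for some `a ∈ m`, then `q m ⊆ R` would force `m = (a)`.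
As `m` is not principal, `q m ⊆ m`, i.e. `m :_Q m = R :_Q m`. Multiplication by a regular
`x ∈ m` carries `R :_Q m` onto `I = (x) :_R m`, so `ν(A) = ν(I) = dim_k I/mI`. Now `m I ⊆ (x)`,
and `m I ⊆ x m` because `A m ⊆ m`, so `x ∉ m I`: hence `I/mI` is an extension of `I/(x) ≅ k^r`
by the line spanned by `x`, and `ν(A) = r + 1`.
-/

open Module Submodule

theorem nuSub_eq_spanFinrank {R Q : Type*} [CommRing R] [CommRing Q] [Algebra R Q]
    (N : Submodule R Q) : nuSub R Q N = N.spanFinrank := by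
  rw [nuSub, spanFinrank_eq_iInf, iInf, Set.range]
  congr 1
  ext n
  simp [eq_comm, and_comm]

theorem modLength_eq_length (R M : Type*) [CommRing R] [AddCommGroup M] [Module R M] :
    modLength R M = Module.length R M :=
  (Module.coe_length R M).symm

theorem Submodule.comap_subtype_span_singleton {R M : Type*} [CommRing R] [AddCommGroup M]
    [Module R M] (N : Submodule R M) (y : N) :
    comap N.subtype (span R {(y : M)}) = span R {y} := by
  apply map_injective_of_injective N.injective_subtype
  rw [map_comap_subtype, inf_eq_right.2 ((span_singleton_le_iff_mem _ _).2 y.2),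
    map_span, Set.image_singleton, subtype_apply]

theorem length_quotient_span_singleton_add_one {R k V : Type*} [CommRing R] [Field k]
    [Algebra R k] (hsurj : Function.Surjective (algebraMap R k)) [AddCommGroup V] [Module k V]
    [Module R V] [IsScalarTower R k V] [FiniteDimensional k V] {v : V} (hv : v ≠ 0) :
    Module.length R (V ⧸ span R {v}) + 1 = finrank k V := by
  have e := Quotient.restrictScalarsEquiv R (span k {v})
  rw [restrictScalars_span R k hsurj] at e
  rw [e.length_eq, Module.length_eq_of_surjective hsurj, Module.length_eq_finrank,
    ← finrank_quotient_add_finrank (span k {v}), finrank_span_singleton hv]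
  norm_cast

theorem IsLocalRing.spanFinrank_eq_length_quotient_add_one {R M : Type*} [CommRing R]
    [IsLocalRing R] [AddCommGroup M] [Module R M] {N : Submodule R M} (hN : N.FG) {y : N}
    (hy_notMem : y ∉ maximalIdeal R • (⊤ : Submodule R N))
    (hm_smul_le : maximalIdeal R • (⊤ : Submodule R N) ≤ span R {y}) :
    (N.spanFinrank : ℕ∞) = Module.length R (N ⧸ span R {y}) + 1 := by
  have : Module.Finite R N := Module.Finite.iff_fg.2 hN
  let := Ideal.Quotient.field (maximalIdeal R)
  have : Module.Finite (R ⧸ maximalIdeal R) (N ⧸ maximalIdeal R • (⊤ : Submodule R N)) :=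
    Module.Finite.of_restrictScalars_finite R _ _
  rw [spanFinrank_eq_finrank_quotient N hN,
    ← (quotientQuotientEquivQuotient _ _ hm_smul_le).length_eq, map_span, Set.image_singleton,
    length_quotient_span_singleton_add_one (k := R ⧸ maximalIdeal R)
      Ideal.Quotient.mk_surjective]
  rwa [ne_eq, mkQ_apply, Quotient.mk_eq_zero]

section FractionalIdeals

variable {R S : Type*} [CommRing R] [CommRing S] [Algebra R S]
  (hinj : Function.Injective (algebraMap R S))
include hinj

theorem map_maximalIdeal_div_self [IsLocalRing R] (hm : ¬ (maximalIdeal R).IsPrincipal) :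
    Submodule.map (Algebra.linearMap R S) (maximalIdeal R) /
        Submodule.map (Algebra.linearMap R S) (maximalIdeal R) =
      1 / Submodule.map (Algebra.linearMap R S) (maximalIdeal R) := by
  refine le_antisymm (fun q hq => ?_) (fun q hq => ?_) <;> rw [mem_div_iff_forall_mul_mem] at hq ⊢
  · exact fun z hz => one_eq_range (R := R) (A := S) ▸ LinearMap.map_le_range (hq z hz)
  rintro _ ⟨a, ha, rfl⟩
  obtain ⟨c, hc⟩ := mem_one.1 (hq _ (mem_map_of_mem ha))
  refine ⟨c, not_not.1 fun hcm => hm ⟨a, le_antisymm (fun s hs => ?_) ?_⟩, hc⟩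
  · -- `q a = c` is a unit, so every `s ∈ m` is `c⁻¹ (q s) a ∈ (a)`
    obtain ⟨t, ht⟩ := mem_one.1 (hq _ (mem_map_of_mem hs))
    have hcs : c * s = t * a := hinj <| by
      simp only [map_mul, hc, ht, Algebra.linearMap_apply]; ring
    have hcu := notMem_maximalIdeal.1 hcm
    rw [Ideal.submodule_span_eq, Ideal.mem_span_singleton']
    exact ⟨hcu.unit⁻¹ * t, by rw [mul_assoc, ← hcs, ← mul_assoc, IsUnit.val_inv_mul, one_mul]⟩
  · rw [Ideal.submodule_span_eq, Ideal.span_le, Set.singleton_subset_iff]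
    exact ha

theorem map_colon_eq_map_mulLeft_one_div {x : R} (hx : IsUnit (algebraMap R S x)) {J : Ideal R}
    (hxJ : x ∈ J) :
    Submodule.map (Algebra.linearMap R S) ((Ideal.span {x}).colon J) =
      Submodule.map (LinearMap.mulLeft R (algebraMap R S x))
        (1 / Submodule.map (Algebra.linearMap R S) J) := by
  ext z
  constructor
  · rintro ⟨c, hc, rfl⟩
    refine ⟨hx.unit⁻¹ * algebraMap R S c, mem_div_iff_forall_mul_mem.2 ?_, ?_⟩
    · rintro _ ⟨a, ha, rfl⟩
      obtain ⟨d, hd⟩ := Ideal.mem_span_singleton'.1 (mem_colon.1 hc a ha)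
      refine mem_one.2 ⟨d, ?_⟩
      rw [← hx.unit.inv_mul_cancel_left (algebraMap R S d), IsUnit.unit_spec, ← map_mul,
        mul_comm x, hd, smul_eq_mul, map_mul, Algebra.linearMap_apply, mul_assoc]
    · simp [← mul_assoc]
  · rintro ⟨q, hq, rfl⟩
    rw [SetLike.mem_coe, mem_div_iff_forall_mul_mem] at hq
    obtain ⟨b, hb⟩ := mem_one.1 (hq _ (mem_map_of_mem hxJ))
    refine ⟨b, mem_colon.2 fun a ha => ?_, by simp [hb, mul_comm]⟩
    obtain ⟨d, hd⟩ := mem_one.1 (hq _ (mem_map_of_mem ha))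
    refine Ideal.mem_span_singleton'.2 ⟨d, hinj ?_⟩
    simp only [Algebra.linearMap_apply] at hb hd
    rw [smul_eq_mul, map_mul, map_mul, hb, hd]
    ring

end FractionalIdeals

namespace IsLocalRing

variable {R : Type*} [CommRing R] [IsLocalRing R]

theorem notMem_span_singleton_mul_maximalIdeal {x : R} (hx : x ∈ nonZeroDivisors R) :
    x ∉ Ideal.span {x} * maximalIdeal R := fun h => by
  obtain ⟨d, hd, hxd⟩ := Ideal.mem_span_singleton_mul.1 h
  have hd1 : d = 1 := (mul_cancel_left_mem_nonZeroDivisors hx).1 (hxd.trans (mul_one x).symm)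
  exact (maximalIdeal.isMaximal R).ne_top ((Ideal.eq_top_iff_one _).2 (hd1 ▸ hd))

theorem maximalIdeal_mul_colon_le (hm : ¬ (maximalIdeal R).IsPrincipal) {x : R}
    (hx : x ∈ nonZeroDivisors R) (hxm : x ∈ maximalIdeal R) :
    maximalIdeal R * (Ideal.span {x}).colon (maximalIdeal R) ≤
      Ideal.span {x} * maximalIdeal R := by
  have hinj := IsFractionRing.injective R (FractionRing R)
  refine Ideal.mul_le.2 fun a ha c hc => ?_
  obtain ⟨q, hq, hcq⟩ := (map_colon_eq_map_mulLeft_one_div hinj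
    (IsLocalization.map_units (FractionRing R) ⟨x, hx⟩) hxm).le (mem_map_of_mem hc)
  rw [← map_maximalIdeal_div_self hinj hm, SetLike.mem_coe, mem_div_iff_forall_mul_mem] at hq
  obtain ⟨d, hd, hdq⟩ := hq _ (mem_map_of_mem ha)
  refine Ideal.mem_span_singleton_mul.2 ⟨d, hd, hinj ?_⟩
  simp only [Algebra.linearMap_apply, LinearMap.mulLeft_apply] at hcq hdq
  rw [map_mul, map_mul, hdq, ← hcq]
  ring

end IsLocalRing

theorem endomorphisms_of_maximal_ideal_general
    (R : Type*) [CommRing R] [IsLocalRing R] [IsNoetherianRing R]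
    (hnotDVR : ¬ (maximalIdeal R).IsPrincipal)
    (x : R) (hxm : x ∈ maximalIdeal R) (hxreg : x ∈ nonZeroDivisors R)
    (r : ℕ)
    (htype : quotLength R ((Ideal.span {x}).colon (maximalIdeal R)) (Ideal.span {x})
      = (r : WithBot ℕ∞)) :
    (Submodule.map (Algebra.linearMap R (FractionRing R)) (maximalIdeal R)) /
        (Submodule.map (Algebra.linearMap R (FractionRing R)) (maximalIdeal R)) =
      (1 : Submodule R (FractionRing R)) /
        (Submodule.map (Algebra.linearMap R (FractionRing R)) (maximalIdeal R)) ∧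
    nuSub R (FractionRing R)
        ((Submodule.map (Algebra.linearMap R (FractionRing R)) (maximalIdeal R)) /
          (Submodule.map (Algebra.linearMap R (FractionRing R)) (maximalIdeal R)))
      = r + 1 := by
  have hinj := IsFractionRing.injective R (FractionRing R)
  have hx : IsUnit (algebraMap R (FractionRing R) x) :=
    IsLocalization.map_units _ (⟨x, hxreg⟩ : nonZeroDivisors R)
  have hdiv := map_maximalIdeal_div_self hinj hnotDVR
  refine ⟨hdiv, ?_⟩
  set I := (Ideal.span {x}).colon (maximalIdeal R)
  let y : I :=
    ⟨x, mem_colon.2 fun s _ => Ideal.mul_mem_right s _ (Ideal.mem_span_singleton_self x)⟩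
  have hy_notMem : y ∉ maximalIdeal R • (⊤ : Submodule R I) := by
    rw [mem_smul_top_iff, smul_eq_mul]
    exact fun h => notMem_span_singleton_mul_maximalIdeal hxreg
      (maximalIdeal_mul_colon_le hnotDVR hxreg hxm h)
  have hm_smul_le : maximalIdeal R • (⊤ : Submodule R I) ≤ span R {y} := by
    rw [← comap_subtype_span_singleton, ← map_le_iff_le_comap, map_smul'', Submodule.map_top,
      range_subtype]
    exact smul_le.2 fun a ha c hc => by rw [smul_eq_mul, mul_comm]; exact mem_colon.1 hc a ha
  have hlen : Module.length R (I ⧸ span R {y}) = r := by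
    rw [← comap_subtype_span_singleton]
    exact_mod_cast (modLength_eq_length _ _).symm.trans htype
  have hnu := spanFinrank_eq_length_quotient_add_one (IsNoetherian.noetherian I) hy_notMem
    hm_smul_le
  rw [nuSub_eq_spanFinrank, hdiv,
    ← spanFinrank_map_eq_of_injective (LinearMap.mulLeft R _) hx.isRegular.left,
    ← map_colon_eq_map_mulLeft_one_div hinj hx hxm, spanFinrank_map_eq_of_injective _ hinj]
  rw [hlen] at hnu
  exact_mod_cast hnu

/-- let `(R, m)` be a one-dimensional Cohen-Macaulay local ring which is not a
DVR, and let `A = m :_Q m = Hom(m, m)` computed in the total ring of fractions `Q` (as the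
submodule quotient `mQ / mQ`).  Then `A = R :_Q m` (that is, `mQ / mQ = 1 / mQ`), and the
minimal number of generators of `A` as an `R`-module equals `r(R) + 1`, where the type
`r(R)` is the length of the socle `((x) : m)/(x)` of `R/(x)` for a regular `x ∈ m`. -/
theorem endomorphisms_of_maximal_ideal
    (R : Type*) [CommRing R] [IsLocalRing R] [IsNoetherianRing R]
    (hdim : ringKrullDim R = 1)
    (hCM : ∃ x ∈ maximalIdeal R, x ∈ nonZeroDivisors R)
    (hnotDVR : ¬ (maximalIdeal R).IsPrincipal)
    (x : R) (hxm : x ∈ maximalIdeal R) (hxreg : x ∈ nonZeroDivisors R)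
    (r : ℕ)
    (htype : quotLength R ((Ideal.span {x}).colon (maximalIdeal R)) (Ideal.span {x})
      = (r : WithBot ℕ∞)) :
    (Submodule.map (Algebra.linearMap R (FractionRing R)) (maximalIdeal R)) /
        (Submodule.map (Algebra.linearMap R (FractionRing R)) (maximalIdeal R)) =
      (1 : Submodule R (FractionRing R)) /
        (Submodule.map (Algebra.linearMap R (FractionRing R)) (maximalIdeal R)) ∧
    nuSub R (FractionRing R)
        ((Submodule.map (Algebra.linearMap R (FractionRing R)) (maximalIdeal R)) /
          (Submodule.map (Algebra.linearMap R (FractionRing R)) (maximalIdeal R)))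
      = r + 1 :=
  endomorphisms_of_maximal_ideal_general R hnotDVR x hxm hxreg r htype
end
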